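/- arXiv:1312.1261 — 4 statements merged into one kernel-verified Lean document; each statement's English description precedes it below -/
import Mathlib

section
/- If a finitely generated group Γ uniformly has property (C) (there is a fixed n such that for every finite set S of pairwise non-conjugate elements there is a representation ρ_S : Γ → SL(n,ℂ) giving distinct traces to the elements of S), then Γ has property (A): there is a single representation ρ : Γ → SL(n,ℂ) such that any two non-conjugate elements of Γ have distinct traces under ρ. -/
open Filter Cardinal

universe u

/-- The trace of the image of `γ` under a representation into `SL(n, ℂ)`. -/
noncomputable def slTrace {Γ : Type*} [Group Γ] {n : ℕ}
    (ρ : Γ →* Matrix.SpecialLinearGroup (Fin n) ℂ) (γ : Γ) : ℂ :=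
  Matrix.trace (↑(ρ γ) : Matrix (Fin n) (Fin n) ℂ)

/-! ### Auxiliary facts -/

/-- A finitely generated group is countable. -/
theorem aux_countable_of_fg (Γ : Type*) [Group Γ] [Group.FG Γ] : Countable Γ := by
  classical
  obtain ⟨S, hS⟩ := Group.fg_def.mp ‹_›
  have h := FreeGroup.range_lift_eq_closure (f := (Subtype.val : {x : Γ // x ∈ (S : Set Γ)} → Γ))
  rw [Subtype.range_coe, hS] at h
  haveI : Countable (FreeGroup {x : Γ // x ∈ (S : Set Γ)}) :=
    FreeGroup.toWord_injective.countable
  exact (MonoidHom.range_eq_top.mp h).countable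

/-- Conjugate elements have the same trace under any representation. -/
theorem slTrace_conj {Γ : Type*} [Group Γ] {n : ℕ}
    (ρ : Γ →* Matrix.SpecialLinearGroup (Fin n) ℂ) {γ η : Γ} (h : IsConj γ η) :
    slTrace ρ γ = slTrace ρ η := by
  obtain ⟨g, hg⟩ := isConj_iff.mp h
  have hu' : ρ g * ρ γ * (ρ g)⁻¹ = ρ η := by
    rw [← map_inv, ← map_mul, ← map_mul, hg]
  have hinv : (↑((ρ g)⁻¹) : Matrix (Fin n) (Fin n) ℂ) * (↑(ρ g) : Matrix (Fin n) (Fin n) ℂ)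
      = (1 : Matrix (Fin n) (Fin n) ℂ) := by
    rw [← Matrix.SpecialLinearGroup.coe_mul, inv_mul_cancel, Matrix.SpecialLinearGroup.coe_one]
  unfold slTrace
  conv_rhs => rw [← hu']
  rw [Matrix.SpecialLinearGroup.coe_mul, Matrix.SpecialLinearGroup.coe_mul,
    Matrix.trace_mul_comm, ← mul_assoc, hinv, one_mul]

/-! ### Embedding fields of small cardinality into `ℂ` -/

set_option synthInstance.maxHeartbeats 1000000 in
set_option maxHeartbeats 1000000 in
/-- Any field of characteristic zero and cardinality at most continuum embeds in `ℂ`. -/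
theorem aux_embed_complex {K : Type u} [Field K] [CharZero K]
    (h : #K ≤ Cardinal.continuum.{u}) : Nonempty (K →+* ℂ) := by
  -- shrink K to Type 0
  have hsmall : Small.{0} K := by
    have : Cardinal.lift.{0} #K ≤ Cardinal.lift.{u} #ℂ := by
      rw [mk_complex, Cardinal.lift_continuum, Cardinal.lift_id']
      exact h
    obtain ⟨f⟩ := Cardinal.lift_mk_le'.mp this
    exact small_of_injective f.injective
  let K₀ : Type := Shrink.{0} K
  let e : K₀ ≃+* K := Shrink.ringEquiv K
  haveI : CharZero K₀ := e.toRingHom.charZero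
  have hK₀ : #K₀ ≤ Cardinal.continuum.{0} := by
    have : Cardinal.lift.{u} #K₀ = Cardinal.lift.{0} #K :=
      Cardinal.lift_mk_eq'.mpr ⟨e.toEquiv⟩
    rw [Cardinal.lift_id'] at this
    have h2 : Cardinal.lift.{u} #K₀ ≤ Cardinal.lift.{u} Cardinal.continuum.{0} := by
      rw [this, Cardinal.lift_continuum]; exact h
    exact Cardinal.lift_le.mp h2
  -- now build a big algebraically closed field over K₀ in Type 0
  let P : Type := MvPolynomial ℂ K₀
  let F : Type := FractionRing P
  let L : Type := AlgebraicClosure F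
  haveI : CharZero P := charZero_of_injective_algebraMap (MvPolynomial.C_injective ℂ K₀)
  haveI : CharZero F := charZero_of_injective_algebraMap (IsFractionRing.injective P F)
  haveI : CharZero L := charZero_of_injective_algebraMap (algebraMap F L).injective
  have hP : #P = Cardinal.continuum := by
    rw [show #P = #(MvPolynomial ℂ K₀) from rfl, MvPolynomial.cardinalMk_eq_max_lift]
    simp only [Cardinal.lift_id, mk_complex, Cardinal.lift_continuum]
    have h1 : #K₀ ⊔ Cardinal.continuum = Cardinal.continuum := sup_eq_right.mpr hK₀
    rw [h1, sup_eq_left.mpr Cardinal.aleph0_le_continuum]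
  have hF : #F = Cardinal.continuum := by
    rw [show #F = #(FractionRing P) from rfl, Cardinal.mk_fractionRing]; exact hP
  have hL : #L = Cardinal.continuum := by
    apply le_antisymm
    · have := Algebra.IsAlgebraic.cardinalMk_le_max F L
      rw [hF, sup_eq_left.mpr Cardinal.aleph0_le_continuum] at this
      exact this
    · rw [← hF]
      exact Cardinal.mk_le_of_injective (algebraMap F L).injective
  obtain ⟨e'⟩ := IsAlgClosed.ringEquiv_of_equiv_of_charZero (K := L) (L := ℂ)
    (by rw [hL]; exact Cardinal.aleph0_lt_continuum) (Cardinal.eq.mp (by rw [hL, mk_complex]))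
  exact ⟨(e'.toRingHom.comp ((algebraMap F L).comp
    ((algebraMap P F).comp (MvPolynomial.C)))).comp e.symm.toRingHom⟩

/-! ### Packing families of matrices into a matrix over a product ring -/

section Pack

variable {I : Type*} {n : ℕ}

/-- Pack a family of matrices into a matrix over the product ring. -/
def packMat (A : I → Matrix (Fin n) (Fin n) ℂ) : Matrix (Fin n) (Fin n) (I → ℂ) :=
  Matrix.of fun i j T => A T i j

theorem packMat_map (A : I → Matrix (Fin n) (Fin n) ℂ) (T : I) :
    (packMat A).map (fun f => f T) = A T := by
  ext i j; rfl

theorem packMat_det (A : I → Matrix (Fin n) (Fin n) ℂ) :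
    (packMat A).det = fun T => (A T).det := by
  funext T
  have h := (Pi.evalRingHom (fun _ : I => ℂ) T).map_det (packMat A)
  simp [RingHom.mapMatrix_apply] at h
  rw [h]
  exact congrArg Matrix.det (packMat_map A T)

theorem packMat_mul (A B : I → Matrix (Fin n) (Fin n) ℂ) :
    packMat (fun T => A T * B T) = packMat A * packMat B := by
  ext i j T
  simp [packMat, Matrix.mul_apply, Finset.sum_apply]

theorem packMat_one : packMat (fun _ : I => (1 : Matrix (Fin n) (Fin n) ℂ)) = 1 := by
  ext i j T
  by_cases h : i = j <;> simp [packMat, Matrix.one_apply, h]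

theorem packMat_trace (A : I → Matrix (Fin n) (Fin n) ℂ) :
    (packMat A).trace = fun T => (A T).trace := by
  funext T
  simp [Matrix.trace, Matrix.diag, packMat, Finset.sum_apply]

end Pack

/-! ### Main theorem -/

set_option maxHeartbeats 1000000 in
/-- If a finitely generated group uniformly has property (C), then it has property (A). -/
theorem uniform_propC_implies_propA (Γ : Type*) [Group Γ] [Group.FG Γ]
    (hC : ∃ n : ℕ, ∀ S : Finset Γ,
      (∀ γ ∈ S, ∀ η ∈ S, γ ≠ η → ¬ IsConj γ η) →
      ∃ ρ : Γ →* Matrix.SpecialLinearGroup (Fin n) ℂ,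
        ∀ γ ∈ S, ∀ η ∈ S, γ ≠ η → slTrace ρ γ ≠ slTrace ρ η) :
    ∃ (n : ℕ) (ρ : Γ →* Matrix.SpecialLinearGroup (Fin n) ℂ),
      ∀ γ η : Γ, ¬ IsConj γ η → slTrace ρ γ ≠ slTrace ρ η := by
  classical
  obtain ⟨n, hC⟩ := hC
  haveI : Countable Γ := aux_countable_of_fg Γ
  -- conjugacy class representatives
  set r : Γ → Γ := fun γ => (ConjClasses.mk γ).out with hr_def
  have hr_conj : ∀ γ, IsConj γ (r γ) := fun γ =>
    ConjClasses.mk_eq_mk_iff_isConj.mp (Quotient.out_eq _).symm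
  have hr_eq : ∀ {γ η : Γ}, IsConj γ η → r γ = r η := by
    intro γ η h
    simp only [hr_def]
    rw [ConjClasses.mk_eq_mk_iff_isConj.mpr h]
  -- for every finite set (not necessarily of non-conjugate elements) there is a
  -- representation separating the traces of its non-conjugate members
  have key : ∀ T : Finset Γ, ∃ ρ : Γ →* Matrix.SpecialLinearGroup (Fin n) ℂ,
      ∀ γ ∈ T, ∀ η ∈ T, ¬ IsConj γ η → slTrace ρ γ ≠ slTrace ρ η := by
    intro T
    have hS : ∀ γ ∈ T.image r, ∀ η ∈ T.image r, γ ≠ η → ¬ IsConj γ η := by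
      intro a ha b hb hab hconj
      obtain ⟨γ₀, _, rfl⟩ := Finset.mem_image.mp ha
      obtain ⟨η₀, _, rfl⟩ := Finset.mem_image.mp hb
      apply hab
      calc r γ₀ = r (r γ₀) := hr_eq (hr_conj γ₀)
        _ = r (r η₀) := hr_eq hconj
        _ = r η₀ := (hr_eq (hr_conj η₀)).symm
    obtain ⟨ρ, hρ⟩ := hC (T.image r) hS
    refine ⟨ρ, fun γ hγ η hη hne => ?_⟩
    have h1 : slTrace ρ γ = slTrace ρ (r γ) := slTrace_conj ρ (hr_conj γ)
    have h2 : slTrace ρ η = slTrace ρ (r η) := slTrace_conj ρ (hr_conj η)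
    rw [h1, h2]
    refine hρ (r γ) (Finset.mem_image_of_mem r hγ) (r η) (Finset.mem_image_of_mem r hη) ?_
    intro hreq
    exact hne ((hr_conj γ).trans (hreq ▸ (hr_conj η).symm))
  choose ρT hρT using key
  -- the ultrafilter on finite subsets
  haveI : Nonempty (Finset Γ) := ⟨∅⟩
  let U : Ultrafilter (Finset Γ) := Ultrafilter.of atTop
  have hU : ∀ γ : Γ, {T : Finset Γ | γ ∈ T} ∈ (U : Filter (Finset Γ)) := by
    intro γ
    apply Ultrafilter.of_le atTop
    apply Filter.mem_atTop_sets.mpr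
    exact ⟨{γ}, fun T hT => Finset.singleton_subset_iff.mp hT⟩
  -- the ultraproduct field
  let K := Filter.Germ ((U : Filter (Finset Γ))) ℂ
  haveI hKchar : CharZero K := by
    constructor
    intro a b hab
    have ha : ((a : ℕ) : K) = ((a : ℂ) : K) := by rw [← Filter.Germ.natCast_def]; rfl
    have hb : ((b : ℕ) : K) = ((b : ℂ) : K) := by rw [← Filter.Germ.natCast_def]; rfl
    rw [ha, hb] at hab
    exact_mod_cast Filter.Germ.const_inj.mp hab
  -- the representation over the product ring
  let σ : Γ →* Matrix.SpecialLinearGroup (Fin n) (Finset Γ → ℂ) :=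
  { toFun := fun γ => ⟨packMat (fun T => (↑(ρT T γ) : Matrix (Fin n) (Fin n) ℂ)), by
      rw [packMat_det]
      funext T
      simp [Matrix.SpecialLinearGroup.det_coe]⟩
    map_one' := by
      apply Subtype.ext
      simp only [map_one, Matrix.SpecialLinearGroup.coe_one]
      exact packMat_one
    map_mul' := fun γ η => by
      apply Subtype.ext
      simp only [map_mul, Matrix.SpecialLinearGroup.coe_mul]
      exact packMat_mul _ _ }
  -- push forward to the germ field
  let c : (Finset Γ → ℂ) →+* K := Filter.Germ.coeRingHom _
  let ρK : Γ →* Matrix.SpecialLinearGroup (Fin n) K :=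
    (Matrix.SpecialLinearGroup.map c).comp σ
  -- traces in the ultraproduct
  have htr : ∀ γ : Γ,
      Matrix.trace (↑(ρK γ) : Matrix (Fin n) (Fin n) K)
        = c (fun T => slTrace (ρT T) γ) := by
    intro γ
    have h1 : (↑(ρK γ) : Matrix (Fin n) (Fin n) K)
        = c.mapMatrix (packMat (fun T => (↑(ρT T γ) : Matrix (Fin n) (Fin n) ℂ))) := rfl
    rw [h1]
    have h2 : Matrix.trace (c.mapMatrix
          (packMat (fun T => (↑(ρT T γ) : Matrix (Fin n) (Fin n) ℂ))))
        = c (Matrix.trace (packMat (fun T => (↑(ρT T γ) : Matrix (Fin n) (Fin n) ℂ)))) := by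
      simp [Matrix.trace, Matrix.diag, RingHom.mapMatrix_apply, Matrix.map_apply, map_sum]
    rw [h2, packMat_trace]
    rfl
  -- trace separation in the ultraproduct
  have hsep : ∀ γ η : Γ, ¬ IsConj γ η →
      Matrix.trace (↑(ρK γ) : Matrix (Fin n) (Fin n) K)
        ≠ Matrix.trace (↑(ρK η) : Matrix (Fin n) (Fin n) K) := by
    intro γ η hcon heq
    rw [htr γ, htr η] at heq
    have hev : ∀ᶠ T in (U : Filter (Finset Γ)), slTrace (ρT T) γ = slTrace (ρT T) η :=
      Filter.Germ.coe_eq.mp heq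
    have hγ' : ∀ᶠ T in (U : Filter (Finset Γ)), γ ∈ T := hU γ
    have hη' : ∀ᶠ T in (U : Filter (Finset Γ)), η ∈ T := hU η
    obtain ⟨T, h1, h2, h3⟩ := (hev.and (hγ'.and hη')).exists
    exact hρT T γ h2 η h3 hcon h1
  -- cardinality of the germ field
  have hcard : #K ≤ Cardinal.continuum := by
    have h1 : #K ≤ #(Finset Γ → ℂ) :=
      Cardinal.mk_le_of_surjective (f := ((↑) : (Finset Γ → ℂ) → K))
        (fun g => Filter.Germ.inductionOn g fun f => ⟨f, rfl⟩)
    refine h1.trans ?_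
    rw [Cardinal.mk_arrow, mk_complex, Cardinal.lift_continuum]
    calc Cardinal.continuum ^ Cardinal.lift.{0} #(Finset Γ)
        ≤ Cardinal.continuum ^ (ℵ₀ : Cardinal) := by
          apply Cardinal.power_le_power_left Cardinal.continuum_ne_zero
          simp only [Cardinal.lift_le_aleph0]
          exact Cardinal.mk_le_aleph0
      _ = Cardinal.continuum := Cardinal.continuum_power_aleph0
  -- embed the ultraproduct into ℂ
  obtain ⟨φ⟩ := aux_embed_complex (K := K) hcard
  refine ⟨n, (Matrix.SpecialLinearGroup.map φ).comp ρK, ?_⟩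
  intro γ η hcon heq
  apply hsep γ η hcon
  apply φ.injective
  have hφtr : ∀ δ : Γ, slTrace ((Matrix.SpecialLinearGroup.map φ).comp ρK) δ
      = φ (Matrix.trace (↑(ρK δ) : Matrix (Fin n) (Fin n) K)) := by
    intro δ
    unfold slTrace
    have h1 : (↑(((Matrix.SpecialLinearGroup.map φ).comp ρK) δ) : Matrix (Fin n) (Fin n) ℂ)
        = φ.mapMatrix (↑(ρK δ) : Matrix (Fin n) (Fin n) K) := rfl
    rw [h1]
    simp [Matrix.trace, Matrix.diag, RingHom.mapMatrix_apply, Matrix.map_apply, map_sum]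
  rw [← hφtr γ, ← hφtr η]
  exact heq
end

section
/- For a finitely generated free group F_r and a connected subgroup condition, the following are equivalent: (a) for every representation ρ : F_r → SL(n,ℂ) there exist non-conjugate γ, η ∈ F_r with Tr(ρ(γ)) = Tr(ρ(η)); (b) there exist non-conjugate γ, η ∈ F_r such that for every representation ρ : F_r → SL(n,ℂ), Tr(ρ(γ)) = Tr(ρ(η)). -/
set_option maxHeartbeats 1000000


namespace SLBaireAux

open Matrix Set Polynomial

/-- The parameter space: `r`-tuples of `n × n` complex matrices (as iterated functions). -/
abbrev EE (r n : ℕ) := Fin r → Fin n → Fin n → ℂ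

/-- Correct a matrix with nonzero determinant to determinant one by scaling a column. -/
noncomputable def dcorr (n : ℕ) (Y : Matrix (Fin n) (Fin n) ℂ) : Matrix (Fin n) (Fin n) ℂ :=
  Y * Matrix.diagonal (fun j : Fin n => if (j : ℕ) = 0 then (Y.det)⁻¹ else 1)

theorem dcorr_det {n : ℕ} {Y : Matrix (Fin n) (Fin n) ℂ} (h : Y.det ≠ 0) :
    (dcorr n Y).det = 1 := by
  rw [dcorr, Matrix.det_mul, Matrix.det_diagonal]
  rcases n with _ | m
  · simp [Matrix.det_isEmpty]
  · rw [Fin.prod_univ_succ]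
    simp only [Fin.val_zero, if_pos rfl, Fin.val_succ, Nat.succ_ne_zero, if_neg,
      Nat.add_eq_zero, and_false, if_false]
    simp [mul_inv_cancel₀ h]

theorem dcorr_of_det_one {n : ℕ} {Y : Matrix (Fin n) (Fin n) ℂ} (h : Y.det = 1) :
    dcorr n Y = Y := by
  simp [dcorr, h]

/-- Send any matrix to a special linear matrix; junk value on singular matrices. -/
noncomputable def toSL (n : ℕ) (Y : Matrix (Fin n) (Fin n) ℂ) :
    Matrix.SpecialLinearGroup (Fin n) ℂ :=
  if h : Y.det ≠ 0 then ⟨dcorr n Y, dcorr_det h⟩ else 1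

theorem toSL_coe {n : ℕ} {Y : Matrix (Fin n) (Fin n) ℂ} (h : Y.det ≠ 0) :
    (toSL n Y : Matrix (Fin n) (Fin n) ℂ) = dcorr n Y := by
  have hT : toSL n Y = ⟨dcorr n Y, dcorr_det h⟩ := dif_pos h
  rw [hT]

theorem toSL_det_one {n : ℕ} {Y : Matrix (Fin n) (Fin n) ℂ} (h : Y.det = 1) :
    (toSL n Y : Matrix (Fin n) (Fin n) ℂ) = Y := by
  rw [toSL_coe (by rw [h]; exact one_ne_zero), dcorr_of_det_one h]

theorem toSL_dcorr {n : ℕ} {Y : Matrix (Fin n) (Fin n) ℂ} (h : Y.det ≠ 0) :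
    toSL n (dcorr n Y) = toSL n Y := by
  apply Subtype.ext
  rw [toSL_det_one (dcorr_det h), toSL_coe h]

/-- The representation associated to a tuple of matrices. -/
noncomputable def rep (r n : ℕ) (x : EE r n) :
    FreeGroup (Fin r) →* Matrix.SpecialLinearGroup (Fin n) ℂ :=
  FreeGroup.lift fun i => toSL n (Matrix.of (x i))

theorem rep_of {r n : ℕ} (x : EE r n) (i : Fin r) :
    rep r n x (FreeGroup.of i) = toSL n (Matrix.of (x i)) :=
  FreeGroup.lift_apply_of

theorem pure_eq {r : ℕ} (i : Fin r) : (pure i : FreeGroup (Fin r)) = FreeGroup.of i := rfl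

/-- The open set of tuples of invertible matrices. -/
def W (r n : ℕ) : Set (EE r n) :=
  {x | ∀ i, (Matrix.of (x i)).det ≠ 0}

/-- The closed set of tuples of determinant-one matrices. -/
def SS (r n : ℕ) : Set (EE r n) :=
  {x | ∀ i, (Matrix.of (x i)).det = 1}

theorem SS_sub_W {r n : ℕ} : SS r n ⊆ W r n := fun x hx i => by
  rw [hx i]; exact one_ne_zero

theorem W_open {r n : ℕ} : IsOpen (W r n) := by
  have : W r n = ⋂ i, (fun x : EE r n => (Matrix.of (x i)).det) ⁻¹' {(0:ℂ)}ᶜ := by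
    ext x; simp [W]
  rw [this]
  exact isOpen_iInter_of_finite fun i =>
    isOpen_compl_singleton.preimage (Continuous.matrix_det (continuous_apply i))

theorem SS_closed {r n : ℕ} : IsClosed (SS r n) := by
  have : SS r n = ⋂ i, (fun x : EE r n => (Matrix.of (x i)).det) ⁻¹' {(1:ℂ)} := by
    ext x; simp [SS]
  rw [this]
  exact isClosed_iInter fun i =>
    isClosed_singleton.preimage (Continuous.matrix_det (continuous_apply i))

section Analytic

variable {r n : ℕ}

theorem an_fsum {E : Type*} [NormedAddCommGroup E] [NormedSpace ℂ E]
    {ι : Type*} {s : Set E} (t : Finset ι) (f : ι → E → ℂ)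
    (h : ∀ i ∈ t, AnalyticOnNhd ℂ (f i) s) :
    AnalyticOnNhd ℂ (fun x => ∑ i ∈ t, f i x) s := by
  classical
  induction t using Finset.induction with
  | empty => simpa using (analyticOnNhd_const : AnalyticOnNhd ℂ (fun _ => (0:ℂ)) s)
  | insert a t hnotmem ih =>
    simp only [Finset.sum_insert hnotmem]
    exact (h a (Finset.mem_insert_self a t)).add (ih fun i hi => h i (Finset.mem_insert_of_mem hi))

theorem an_fprod {E : Type*} [NormedAddCommGroup E] [NormedSpace ℂ E]
    {ι : Type*} {s : Set E} (t : Finset ι) (f : ι → E → ℂ)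
    (h : ∀ i ∈ t, AnalyticOnNhd ℂ (f i) s) :
    AnalyticOnNhd ℂ (fun x => ∏ i ∈ t, f i x) s := by
  classical
  induction t using Finset.induction with
  | empty => simpa using (analyticOnNhd_const : AnalyticOnNhd ℂ (fun _ => (1:ℂ)) s)
  | insert a t hnotmem ih =>
    simp only [Finset.prod_insert hnotmem]
    exact (h a (Finset.mem_insert_self a t)).mul (ih fun i hi => h i (Finset.mem_insert_of_mem hi))

theorem an_det {E : Type*} [NormedAddCommGroup E] [NormedSpace ℂ E]
    {s : Set E} {M : E → Matrix (Fin n) (Fin n) ℂ}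
    (h : ∀ i j, AnalyticOnNhd ℂ (fun x => M x i j) s) :
    AnalyticOnNhd ℂ (fun x => (M x).det) s := by
  have hrw : (fun x => (M x).det) = fun x =>
      ∑ σ : Equiv.Perm (Fin n), ((Equiv.Perm.sign σ : ℤ) : ℂ) * ∏ i, M x (σ i) i := by
    funext x
    rw [Matrix.det_apply]
    refine Finset.sum_congr rfl fun σ _ => ?_
    rw [Units.smul_def, zsmul_eq_mul]
  rw [hrw]
  exact an_fsum _ _ fun σ _ =>
    analyticOnNhd_const.mul (an_fprod _ _ fun i _ => h (σ i) i)

theorem an_entry (i : Fin r) (a b : Fin n) {s : Set (EE r n)} :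
    AnalyticOnNhd ℂ (fun x : EE r n => x i a b) s := by
  intro x hx
  exact (((ContinuousLinearMap.proj (R := ℂ) (φ := fun _ : Fin n => ℂ) b).comp
    ((ContinuousLinearMap.proj (R := ℂ) (φ := fun _ : Fin n => Fin n → ℂ) a).comp
      (ContinuousLinearMap.proj (R := ℂ) (φ := fun _ : Fin r => Fin n → Fin n → ℂ) i))).analyticAt x)

theorem an_of_det (i : Fin r) {s : Set (EE r n)} :
    AnalyticOnNhd ℂ (fun x : EE r n => (Matrix.of (x i)).det) s :=
  an_det fun a b => an_entry i a b

theorem an_dcorr (i : Fin r) (a b : Fin n) :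
    AnalyticOnNhd ℂ (fun x : EE r n => dcorr n (Matrix.of (x i)) a b) (W r n) := by
  have hrw : (fun x : EE r n => dcorr n (Matrix.of (x i)) a b)
      = fun x => ∑ k, x i a k *
        (if k = b then (if (k : ℕ) = 0 then ((Matrix.of (x i)).det)⁻¹ else 1) else 0) := by
    funext x
    rw [dcorr, Matrix.mul_apply]
    refine Finset.sum_congr rfl fun k _ => ?_
    rw [Matrix.diagonal_apply]
    rfl
  rw [hrw]
  refine an_fsum _ _ fun k _ => (an_entry i a k).mul ?_
  by_cases hk : k = b
  · simp only [hk, if_pos rfl]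
    by_cases h0 : ((b : Fin n) : ℕ) = 0
    · simp only [h0, if_pos rfl]
      exact (an_of_det i).inv fun x hx => hx i
    · simp only [h0, if_false]
      exact analyticOnNhd_const
  · simp only [hk, if_false]
    exact analyticOnNhd_const

theorem an_word (g : FreeGroup (Fin r)) :
    ∀ a b : Fin n, AnalyticOnNhd ℂ
      (fun x : EE r n => (rep r n x g : Matrix (Fin n) (Fin n) ℂ) a b) (W r n) := by
  induction g using FreeGroup.induction_on with
  | C1 =>
    intro a b
    have : (fun x : EE r n => (rep r n x 1 : Matrix (Fin n) (Fin n) ℂ) a b)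
        = fun _ => (1 : Matrix (Fin n) (Fin n) ℂ) a b := by
      funext x; rw [_root_.map_one]; rfl
    rw [this]; exact analyticOnNhd_const
  | of i =>
    intro a b
    intro x hx
    refine (an_dcorr i a b x hx).congr ?_
    filter_upwards [W_open.mem_nhds hx] with y hy
    rw [rep_of, toSL_coe (hy i)]
  | inv_of i hi =>
    rw [← pure_eq] at hi ⊢
    intro a b
    have hrw : (fun x : EE r n => (rep r n x (pure i)⁻¹ : Matrix (Fin n) (Fin n) ℂ) a b)
        = fun x => ((rep r n x (pure i) : Matrix (Fin n) (Fin n) ℂ).updateRow b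
            (Pi.single a 1)).det := by
      funext x
      rw [map_inv, Matrix.SpecialLinearGroup.coe_inv, Matrix.adjugate_apply]
    rw [hrw]
    apply an_det
    intro k l
    by_cases hk : k = b
    · have : (fun x : EE r n =>
          ((rep r n x (pure i) : Matrix (Fin n) (Fin n) ℂ).updateRow b (Pi.single a 1)) k l)
          = fun _ => (Pi.single a (1:ℂ) : Fin n → ℂ) l := by
        funext x; simp [Matrix.updateRow_apply, hk]
      rw [this]; exact analyticOnNhd_const
    · have : (fun x : EE r n =>
          ((rep r n x (pure i) : Matrix (Fin n) (Fin n) ℂ).updateRow b (Pi.single a 1)) k l)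
          = fun x => (rep r n x (pure i) : Matrix (Fin n) (Fin n) ℂ) k l := by
        funext x; simp [Matrix.updateRow_apply, hk]
      rw [this]; exact hi k l
  | mul g₁ g₂ h₁ h₂ =>
    intro a b
    have hrw : (fun x : EE r n => (rep r n x (g₁ * g₂) : Matrix (Fin n) (Fin n) ℂ) a b)
        = fun x => ∑ k, (rep r n x g₁ : Matrix (Fin n) (Fin n) ℂ) a k *
            (rep r n x g₂ : Matrix (Fin n) (Fin n) ℂ) k b := by
      funext x; rw [_root_.map_mul, Matrix.SpecialLinearGroup.coe_mul, Matrix.mul_apply]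
    rw [hrw]
    exact an_fsum _ _ fun k _ => (h₁ a k).mul (h₂ k b)

/-- The trace-difference function of a pair of group elements, on the parameter space. -/
noncomputable def fdiff (r n : ℕ) (p : FreeGroup (Fin r) × FreeGroup (Fin r)) (x : EE r n) : ℂ :=
  slTrace (rep r n x) p.1 - slTrace (rep r n x) p.2

theorem an_trace (g : FreeGroup (Fin r)) :
    AnalyticOnNhd ℂ (fun x : EE r n => slTrace (rep r n x) g) (W r n) := by
  have : (fun x : EE r n => slTrace (rep r n x) g)
      = fun x => ∑ a, (rep r n x g : Matrix (Fin n) (Fin n) ℂ) a a := by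
    funext x; rw [slTrace, Matrix.trace]; rfl
  rw [this]; exact an_fsum _ _ fun a _ => an_word g a a

theorem an_fdiff (p : FreeGroup (Fin r) × FreeGroup (Fin r)) :
    AnalyticOnNhd ℂ (fdiff r n p) (W r n) :=
  (an_trace p.1).sub (an_trace p.2)

end Analytic

section Smap

variable {r n : ℕ}

/-- Retraction of the invertible tuples onto the determinant-one tuples. -/
noncomputable def smap (r n : ℕ) (x : EE r n) : EE r n :=
  fun i a b => dcorr n (Matrix.of (x i)) a b

theorem smap_of (x : EE r n) (i : Fin r) :
    Matrix.of (smap r n x i) = dcorr n (Matrix.of (x i)) := rfl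

theorem smap_mem_SS {x : EE r n} (hx : x ∈ W r n) : smap r n x ∈ SS r n := fun i => by
  rw [smap_of]; exact dcorr_det (hx i)

theorem smap_eq_self {x : EE r n} (hx : x ∈ SS r n) : smap r n x = x := by
  funext i a b
  show dcorr n (Matrix.of (x i)) a b = x i a b
  rw [dcorr_of_det_one (hx i)]
  rfl

theorem rep_smap {x : EE r n} (hx : x ∈ W r n) : rep r n (smap r n x) = rep r n x := by
  apply FreeGroup.ext_hom
  intro i
  rw [rep_of, rep_of, smap_of, toSL_dcorr (hx i)]

theorem smap_continuousAt {x : EE r n} (hx : x ∈ W r n) : ContinuousAt (smap r n) x := by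
  rw [continuousAt_pi]; intro i
  rw [continuousAt_pi]; intro a
  rw [continuousAt_pi]; intro b
  exact (an_dcorr i a b x hx).continuousAt

theorem rep_eq_of_rep' {ρ : FreeGroup (Fin r) →* Matrix.SpecialLinearGroup (Fin n) ℂ} :
    rep r n (fun i a b => (ρ (FreeGroup.of i) : Matrix (Fin n) (Fin n) ℂ) a b) = ρ := by
  apply FreeGroup.ext_hom
  intro i
  rw [rep_of]
  apply Subtype.ext
  show (toSL n (Matrix.of fun a b => (ρ (FreeGroup.of i) : Matrix (Fin n) (Fin n) ℂ) a b) :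
      Matrix (Fin n) (Fin n) ℂ) = ↑(ρ (FreeGroup.of i))
  have : (Matrix.of fun a b => (ρ (FreeGroup.of i) : Matrix (Fin n) (Fin n) ℂ) a b)
      = (↑(ρ (FreeGroup.of i)) : Matrix (Fin n) (Fin n) ℂ) := rfl
  rw [this, toSL_det_one (ρ (FreeGroup.of i)).2]

end Smap

section Connected

theorem U_pathconn (n : ℕ) :
    IsPathConnected {M : Fin n → Fin n → ℂ | (Matrix.of M).det ≠ 0} := by
  classical
  have hone : (fun a b => (1 : Matrix (Fin n) (Fin n) ℂ) a b)
      ∈ {M : Fin n → Fin n → ℂ | (Matrix.of M).det ≠ 0} := by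
    show (Matrix.of fun a b => (1 : Matrix (Fin n) (Fin n) ℂ) a b).det ≠ 0
    rw [show (Matrix.of fun a b => (1 : Matrix (Fin n) (Fin n) ℂ) a b)
        = (1 : Matrix (Fin n) (Fin n) ℂ) from rfl, Matrix.det_one]
    exact one_ne_zero
  rw [isPathConnected_iff]
  refine ⟨⟨_, hone⟩, ?_⟩
  intro A hA B hB
  set q : Polynomial ℂ :=
    (Matrix.of fun a b => Polynomial.C (A a b) * Polynomial.X
      + Polynomial.C (B a b) * (1 - Polynomial.X)).det with hq
  have heval : ∀ z : ℂ, q.eval z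
      = (Matrix.of fun a b => A a b * z + B a b * (1 - z)).det := by
    intro z
    rw [hq, ← Polynomial.coe_evalRingHom, RingHom.map_det]
    congr 1
    ext a b
    simp [Matrix.map_apply]
  have h1 : q.eval 1 = (Matrix.of A).det := by
    rw [heval]; congr 1; funext a b; simp
  have h0 : q.eval 0 = (Matrix.of B).det := by
    rw [heval]; congr 1; funext a b; simp
  have hqne : q ≠ 0 := by
    intro h
    exact hA (by rw [← h1, h, Polynomial.eval_zero])
  have hfin : {z : ℂ | q.IsRoot z}.Finite := Polynomial.finite_setOf_isRoot hqne
  have hpc : IsPathConnected {z : ℂ | q.IsRoot z}ᶜ :=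
    Set.Countable.isPathConnected_compl_of_one_lt_rank
      (by rw [Complex.rank_real_complex]; exact Cardinal.one_lt_two) hfin.countable
  have h1m : (1:ℂ) ∈ {z : ℂ | q.IsRoot z}ᶜ := by
    simp only [Set.mem_compl_iff, Set.mem_setOf_eq, Polynomial.IsRoot.def]
    rw [h1]; exact hA
  have h0m : (0:ℂ) ∈ {z : ℂ | q.IsRoot z}ᶜ := by
    simp only [Set.mem_compl_iff, Set.mem_setOf_eq, Polynomial.IsRoot.def]
    rw [h0]; exact hB
  have hj : JoinedIn ({z : ℂ | q.IsRoot z}ᶜ) (0:ℂ) 1 := hpc.joinedIn 0 h0m 1 h1m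
  set g : ℂ → (Fin n → Fin n → ℂ) := fun z a b => A a b * z + B a b * (1 - z) with hg
  have hgc : Continuous g := by
    apply continuous_pi; intro a; apply continuous_pi; intro b
    fun_prop
  have hsub : g '' ({z : ℂ | q.IsRoot z}ᶜ) ⊆ {M : Fin n → Fin n → ℂ | (Matrix.of M).det ≠ 0} := by
    rintro _ ⟨z, hz, rfl⟩
    show (Matrix.of (g z)).det ≠ 0
    rw [show Matrix.of (g z) = Matrix.of fun a b => A a b * z + B a b * (1 - z) from rfl, ← heval]
    exact hz
  have hj2 := (hj.map hgc).mono hsub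
  have hg0 : g 0 = B := by funext a b; simp [hg]
  have hg1 : g 1 = A := by funext a b; simp [hg]
  rw [hg0, hg1] at hj2
  exact hj2.symm

theorem W_preconn {r n : ℕ} : IsPreconnected (W r n) := by
  have : W r n = Set.pi Set.univ
      (fun _ : Fin r => {M : Fin n → Fin n → ℂ | (Matrix.of M).det ≠ 0}) := by
    ext x; simp [W, Set.mem_pi]
  rw [this]
  exact isPreconnected_univ_pi fun i => (U_pathconn n).isConnected.isPreconnected

end Connected

end SLBaireAux

open SLBaireAux in
/-- For a free group `F_r` the following are equivalent: (a) every representation into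
`SL(n,ℂ)` identifies the traces of some pair of non-conjugate elements; (b) there is a
single pair of non-conjugate elements whose traces agree under every representation. -/
theorem freeGroup_trace_equiv_baire (r n : ℕ) :
    (∀ ρ : FreeGroup (Fin r) →* Matrix.SpecialLinearGroup (Fin n) ℂ,
      ∃ γ η : FreeGroup (Fin r), ¬ IsConj γ η ∧ slTrace ρ γ = slTrace ρ η) ↔
    (∃ γ η : FreeGroup (Fin r), ¬ IsConj γ η ∧
      ∀ ρ : FreeGroup (Fin r) →* Matrix.SpecialLinearGroup (Fin n) ℂ,
        slTrace ρ γ = slTrace ρ η) := by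
  constructor
  · intro ha
    by_contra hb
    push_neg at hb
    haveI : CompleteSpace (SS r n) := SS_closed.completeSpace_coe
    set Ω : FreeGroup (Fin r) × FreeGroup (Fin r) → Set (SS r n) := fun p =>
      {s : SS r n | ¬ IsConj p.1 p.2 → fdiff r n p ↑s ≠ 0} with hΩ
    have hcont : ∀ p, Continuous fun s : SS r n => fdiff r n p (↑s : EE r n) := by
      intro p
      exact ((an_fdiff p).continuousOn).comp_continuous continuous_subtype_val
        fun s => SS_sub_W s.2
    have hopen : ∀ p, IsOpen (Ω p) := by
      intro p
      by_cases hc : IsConj p.1 p.2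
      · have : Ω p = Set.univ := Set.eq_univ_of_forall fun s hnc => absurd hc hnc
        rw [this]; exact isOpen_univ
      · have : Ω p = (fun s : SS r n => fdiff r n p ↑s) ⁻¹' {(0:ℂ)}ᶜ := by
          ext s
          exact ⟨fun h => h hc, fun h _ => h⟩
        rw [this]; exact isOpen_compl_singleton.preimage (hcont p)
    have hdense : ∀ p, Dense (Ω p) := by
      intro p
      by_cases hc : IsConj p.1 p.2
      · have : Ω p = Set.univ := Set.eq_univ_of_forall fun s hnc => absurd hc hnc
        rw [this]; exact dense_univ
      · obtain ⟨ρ₀, hρ₀⟩ := hb p.1 p.2 hc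
        by_contra hnd
        rw [dense_iff_inter_open] at hnd
        push_neg at hnd
        obtain ⟨O, hOopen, hOne, hOint⟩ := hnd
        obtain ⟨V, hVopen, hVO⟩ := isOpen_induced_iff.1 hOopen
        obtain ⟨s₀, hs₀⟩ := hOne
        have hx₀S : (↑s₀ : EE r n) ∈ SS r n := s₀.2
        have hx₀W : (↑s₀ : EE r n) ∈ W r n := SS_sub_W hx₀S
        have hs₀V : (↑s₀ : EE r n) ∈ V := by
          rw [← hVO] at hs₀; exact hs₀
        have hsmapx₀ : smap r n ↑s₀ = ↑s₀ := smap_eq_self hx₀S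
        have hVnhds : smap r n ⁻¹' V ∈ nhds (↑s₀ : EE r n) :=
          (smap_continuousAt hx₀W).preimage_mem_nhds
            (hVopen.mem_nhds (by rw [hsmapx₀]; exact hs₀V))
        have hev : fdiff r n p =ᶠ[nhds (↑s₀ : EE r n)] 0 := by
          filter_upwards [hVnhds, W_open.mem_nhds hx₀W] with y hyV hyW
          have hyS : smap r n y ∈ SS r n := smap_mem_SS hyW
          have hmemO : (⟨smap r n y, hyS⟩ : SS r n) ∈ O := by
            rw [← hVO]; exact hyV
          have h0' : fdiff r n p (smap r n y) = 0 := by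
            by_contra hne0
            have hmem2 : (⟨smap r n y, hyS⟩ : SS r n) ∈ O ∩ Ω p :=
              ⟨hmemO, fun _ => hne0⟩
            rw [hOint] at hmem2
            exact hmem2
          have : fdiff r n p y = fdiff r n p (smap r n y) := by
            rw [fdiff, fdiff, rep_smap hyW]
          rw [this, h0']
          rfl
        have hEq : Set.EqOn (fdiff r n p) 0 (W r n) :=
          (an_fdiff p).eqOn_zero_of_preconnected_of_eventuallyEq_zero W_preconn hx₀W hev
        set xw : EE r n := fun i a b => (ρ₀ (FreeGroup.of i) : Matrix (Fin n) (Fin n) ℂ) a b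
          with hxw
        have hxwS : xw ∈ SS r n := fun i => (ρ₀ (FreeGroup.of i)).2
        have hzero : fdiff r n p xw = 0 := hEq (SS_sub_W hxwS)
        rw [fdiff, hxw, rep_eq_of_rep'] at hzero
        exact hρ₀ (sub_eq_zero.1 hzero)
    haveI : Nonempty (SS r n) := ⟨⟨fun i a b => (1 : Matrix (Fin n) (Fin n) ℂ) a b, fun i => by
      show (Matrix.of fun a b => (1 : Matrix (Fin n) (Fin n) ℂ) a b).det = 1
      rw [show (Matrix.of fun a b => (1 : Matrix (Fin n) (Fin n) ℂ) a b)
          = (1 : Matrix (Fin n) (Fin n) ℂ) from rfl, Matrix.det_one]⟩⟩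
    haveI : Countable (FreeGroup (Fin r)) := by unfold FreeGroup; infer_instance
    obtain ⟨s, hs⟩ := (dense_iInter_of_isOpen hopen hdense).nonempty
    obtain ⟨γ, η, hnc, heq⟩ := ha (rep r n ↑s)
    have hmem := Set.mem_iInter.1 hs (γ, η)
    exact (hmem hnc) (by rw [fdiff, sub_eq_zero]; exact heq)
  · rintro ⟨γ, η, hne, hall⟩ ρ
    exact ⟨γ, η, hne, hall ρ⟩
end

section
/- A finitely generated group Γ has property (C) for finite sets of conjugacy classes if and only if it has property (D) for pairs: that is, if for every pair of non-conjugate elements γ, η there is a finite-dimensional complex representation separating their traces, then for every finite set S of pairwise non-conjugate elements there is a single representation ρ_S into some SL(n_S,ℂ) such that the traces Tr(ρ_S(γ_i)) are pairwise distinct for γ_i ∈ S. -/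
section AuxOpen
open Matrix

section Aux
variable {Γ : Type*} [Group Γ]

noncomputable def sumSL {n m : ℕ} (A : SpecialLinearGroup (Fin n) ℂ)
    (B : SpecialLinearGroup (Fin m) ℂ) : SpecialLinearGroup (Fin (n + m)) ℂ :=
  ⟨(Matrix.reindexAlgEquiv ℂ ℂ finSumFinEquiv) (Matrix.fromBlocks (↑A) 0 0 (↑B)), by
    simp [Matrix.reindexAlgEquiv_apply, Matrix.det_reindex_self,
      Matrix.det_fromBlocks_zero₂₁, A.prop, B.prop]⟩

lemma sumSL_mul {n m : ℕ} (A C : SpecialLinearGroup (Fin n) ℂ)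
    (B D : SpecialLinearGroup (Fin m) ℂ) :
    sumSL (A * C) (B * D) = sumSL A B * sumSL C D := by
  apply Subtype.ext
  rw [Matrix.SpecialLinearGroup.coe_mul]
  simp only [sumSL, Matrix.SpecialLinearGroup.coe_mul]
  rw [← _root_.map_mul, Matrix.fromBlocks_multiply]
  simp

lemma sumSL_one {n m : ℕ} :
    sumSL (1 : SpecialLinearGroup (Fin n) ℂ) (1 : SpecialLinearGroup (Fin m) ℂ) = 1 := by
  apply Subtype.ext
  simp only [sumSL, Matrix.SpecialLinearGroup.coe_one, Matrix.fromBlocks_one]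
  simp

noncomputable def sumRep {n m : ℕ} (ρ : Γ →* SpecialLinearGroup (Fin n) ℂ)
    (σ : Γ →* SpecialLinearGroup (Fin m) ℂ) :
    Γ →* SpecialLinearGroup (Fin (n + m)) ℂ where
  toFun γ := sumSL (ρ γ) (σ γ)
  map_one' := by simp [sumSL_one]
  map_mul' x y := by simp [← sumSL_mul]

lemma trace_sumSL {n m : ℕ} (A : SpecialLinearGroup (Fin n) ℂ)
    (B : SpecialLinearGroup (Fin m) ℂ) :
    Matrix.trace (↑(sumSL A B) : Matrix (Fin (n+m)) (Fin (n+m)) ℂ)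
      = Matrix.trace (↑A : Matrix (Fin n) (Fin n) ℂ)
        + Matrix.trace (↑B : Matrix (Fin m) (Fin m) ℂ) := by
  simp only [sumSL, Matrix.trace, Matrix.diag, reindexAlgEquiv_apply, reindex_apply,
    submatrix_apply]
  have h := Fintype.sum_equiv finSumFinEquiv
      (fun j : Fin n ⊕ Fin m =>
        Matrix.fromBlocks (↑A : Matrix (Fin n) (Fin n) ℂ) 0 0 (↑B) j j)
      (fun i : Fin (n+m) =>
        Matrix.fromBlocks (↑A : Matrix (Fin n) (Fin n) ℂ) 0 0 (↑B)
          (finSumFinEquiv.symm i) (finSumFinEquiv.symm i))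
      (fun j => by simp)
  rw [← h]
  simp [Fintype.sum_sum_type]

lemma slTrace_sumRep {n m : ℕ} (ρ : Γ →* SpecialLinearGroup (Fin n) ℂ)
    (σ : Γ →* SpecialLinearGroup (Fin m) ℂ) (γ : Γ) :
    slTrace (sumRep ρ σ) γ = slTrace ρ γ + slTrace σ γ := by
  simpa [slTrace, sumRep] using trace_sumSL (ρ γ) (σ γ)

noncomputable def listRep : List (Σ n : ℕ, Γ →* SpecialLinearGroup (Fin n) ℂ) →
    Σ n : ℕ, Γ →* SpecialLinearGroup (Fin n) ℂ
  | [] => ⟨0, 1⟩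
  | r :: l => ⟨r.1 + (listRep l).1, sumRep r.2 (listRep l).2⟩

lemma slTrace_listRep (l : List (Σ n : ℕ, Γ →* SpecialLinearGroup (Fin n) ℂ)) (γ : Γ) :
    slTrace (listRep l).2 γ = (l.map (fun r => slTrace r.2 γ)).sum := by
  induction l with
  | nil => simp [listRep, slTrace]; exact Matrix.trace_fin_zero _
  | cons r l ih => simp [listRep, slTrace_sumRep, ih]

lemma slTrace_listRep_replicate (m : ℕ) (r : Σ n : ℕ, Γ →* SpecialLinearGroup (Fin n) ℂ)
    (γ : Γ) : slTrace (listRep (List.replicate m r)).2 γ = m * slTrace r.2 γ := by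
  rw [slTrace_listRep, List.map_replicate, List.sum_replicate, nsmul_eq_mul]

end Aux


open Polynomial

/-- Property (D) (trace separation of non-conjugate pairs) is equivalent to
property (C) (simultaneous trace separation of finite sets of pairwise
non-conjugate elements). -/
theorem propD_iff_propC (Γ : Type*) [Group Γ] [Group.FG Γ] :
    (∀ γ η : Γ, ¬ IsConj γ η →
      ∃ (n : ℕ) (ρ : Γ →* Matrix.SpecialLinearGroup (Fin n) ℂ),
        slTrace ρ γ ≠ slTrace ρ η) ↔
    (∀ S : Finset Γ, (∀ γ ∈ S, ∀ η ∈ S, γ ≠ η → ¬ IsConj γ η) →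
      ∃ (nS : ℕ) (ρS : Γ →* Matrix.SpecialLinearGroup (Fin nS) ℂ),
        ∀ γ ∈ S, ∀ η ∈ S, γ ≠ η → slTrace ρS γ ≠ slTrace ρS η) := by
  classical
  constructor
  · intro hD S hS
    -- choose a separating rep for each non-conjugate pair
    choose nF F hF using fun p : {p : Γ × Γ // ¬ IsConj p.1 p.2} => hD p.1.1 p.1.2 p.2
    set g : Γ × Γ → Σ n : ℕ, Γ →* SpecialLinearGroup (Fin n) ℂ :=
      fun p => if h : ¬ IsConj p.1 p.2 then ⟨nF ⟨p, h⟩, F ⟨p, h⟩⟩ else ⟨0, 1⟩ with hg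
    set L : List (Γ × Γ) := (S ×ˢ S).toList with hL
    set K := L.length with hK
    set t : Fin K → Γ → ℂ := fun i γ => slTrace (g (L.get i)).2 γ with ht
    have hsep : ∀ γ ∈ S, ∀ η ∈ S, γ ≠ η → ∃ i : Fin K, t i γ ≠ t i η := by
      intro γ hγ η hη hne
      have hmem : (γ, η) ∈ L := by
        rw [hL, Finset.mem_toList, Finset.mem_product]; exact ⟨hγ, hη⟩
      obtain ⟨i, hi⟩ := List.get_of_mem hmem
      refine ⟨i, ?_⟩
      have hnc : ¬ IsConj γ η := hS γ hγ η hη hne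
      have h2 : g (L.get i) = ⟨nF ⟨(γ, η), hnc⟩, F ⟨(γ, η), hnc⟩⟩ := by
        rw [hi]; exact dif_pos hnc
      simp only [ht]
      rw [h2]
      exact hF ⟨(γ, η), hnc⟩
    -- the polynomial attached to a pair
    set q : Γ → Γ → ℂ[X] :=
      fun γ η => ∑ i : Fin K, Polynomial.C (t i γ - t i η) * X ^ (i : ℕ) with hq
    have hqne : ∀ γ ∈ S, ∀ η ∈ S, γ ≠ η → q γ η ≠ 0 := by
      intro γ hγ η hη hne h0
      obtain ⟨i, hi⟩ := hsep γ hγ η hη hne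
      have hc : (q γ η).coeff (i : ℕ) = t i γ - t i η := by
        rw [hq]
        rw [Polynomial.finset_sum_coeff]
        rw [Finset.sum_eq_single i]
        · rw [Polynomial.coeff_C_mul, Polynomial.coeff_X_pow, if_pos rfl, mul_one]
        · intro j _ hj
          have hij : (i : ℕ) ≠ (j : ℕ) := fun h => hj (Fin.ext h.symm)
          rw [Polynomial.coeff_C_mul, Polynomial.coeff_X_pow, if_neg hij, mul_zero]
        · intro h; exact absurd (Finset.mem_univ i) h
      rw [h0] at hc
      simp only [Polynomial.coeff_zero] at hc
      exact hi (sub_eq_zero.mp hc.symm)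
    -- avoid the finitely many roots
    set Bad : Set ℂ :=
      ⋃ p ∈ (↑(S ×ˢ S) : Set (Γ × Γ)), {z | q p.1 p.2 ≠ 0 ∧ (q p.1 p.2).IsRoot z} with hBad
    have hBadFin : Bad.Finite := by
      refine Set.Finite.biUnion (S ×ˢ S).finite_toSet (fun p _ => ?_)
      by_cases h : q p.1 p.2 = 0
      · convert Set.finite_empty using 1
        ext z; simp [h]
      · exact (Polynomial.finite_setOf_isRoot h).subset (fun z hz => hz.2)
    obtain ⟨z, ⟨x, rfl⟩, hzBad⟩ :=
      (Set.infinite_range_of_injective (Nat.cast_injective (R := ℂ))).exists_notMem_finite hBadFin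
    -- the big representation
    set bigL : List (Σ n : ℕ, Γ →* SpecialLinearGroup (Fin n) ℂ) :=
      List.ofFn (fun i : Fin K => listRep (List.replicate (x ^ (i : ℕ)) (g (L.get i)))) with hbigL
    refine ⟨(listRep bigL).1, (listRep bigL).2, ?_⟩
    have htr : ∀ γ : Γ, slTrace (listRep bigL).2 γ = ∑ i : Fin K, (x : ℂ) ^ (i : ℕ) * t i γ := by
      intro γ
      rw [slTrace_listRep, hbigL, List.map_ofFn, List.sum_ofFn]
      refine Finset.sum_congr rfl (fun i _ => ?_)
      simp [slTrace_listRep_replicate, ht]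
    intro γ hγ η hη hne
    have heval : slTrace (listRep bigL).2 γ - slTrace (listRep bigL).2 η = (q γ η).eval (x : ℂ) := by
      rw [htr, htr, hq, Polynomial.eval_finset_sum, ← Finset.sum_sub_distrib]
      refine Finset.sum_congr rfl (fun i _ => ?_)
      simp; ring
    intro hEq
    have hzero : (q γ η).eval (x : ℂ) = 0 := by rw [← heval, hEq, sub_self]
    apply hzBad
    rw [hBad]
    refine Set.mem_biUnion (show ((γ, η) : Γ × Γ) ∈ (↑(S ×ˢ S) : Set (Γ × Γ)) from ?_) ?_
    · simp [hγ, hη]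
    · exact ⟨hqne γ hγ η hη hne, hzero⟩
  · intro hC γ η hnc
    have hne : γ ≠ η := fun h => hnc (h ▸ IsConj.refl γ)
    obtain ⟨nS, ρS, hρ⟩ := hC {γ, η} (by
      intro a ha b hb hab
      simp only [Finset.mem_insert, Finset.mem_singleton] at ha hb
      rcases ha with rfl | rfl <;> rcases hb with rfl | rfl
      · exact absurd rfl hab
      · exact hnc
      · exact fun h => hnc h.symm
      · exact absurd rfl hab)
    exact ⟨nS, ρS, hρ γ (by simp) η (by simp) hne⟩


end AuxOpen
end

section
/- Let Δ be a finite-index normal subgroup of the free group F_r with quotient Q = F_r/Δ. Then there exist n, a prime p, a faithful representation ρ : F_r → SL(n,ℤ), and an injective homomorphism ι : Q → SL(n, F_p) such that r_p ∘ ρ = ι ∘ φ_Δ, where r_p : SL(n,ℤ) → SL(n,F_p) is reduction mod p and φ_Δ : F_r → Q is the quotient map. -/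
open Matrix Equiv Pointwise

/-- The matrix `1 + 3k·w uᵀ` with `w = (c,1)`, `u = (1,-c)` (so `u·w = 0`). -/
def pingMat (c k : ℤ) : Matrix.SpecialLinearGroup (Fin 2) ℤ :=
  ⟨!![1 + 3*c*k, -3*c^2*k; 3*k, 1 - 3*c*k], by
    rw [Matrix.det_fin_two_of]; ring⟩

lemma pingMat_mul (c k l : ℤ) : pingMat c k * pingMat c l = pingMat c (k + l) := by
  apply Subtype.ext
  show (pingMat c k).1 * (pingMat c l).1 = _
  simp only [pingMat, Matrix.mul_fin_two]
  congr 1 <;> ring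

lemma pingMat_zero (c : ℤ) : pingMat c 0 = 1 := by
  apply Subtype.ext
  show (pingMat c 0).1 = (1 : Matrix (Fin 2) (Fin 2) ℤ)
  simp only [pingMat]
  ext i j
  fin_cases i <;> fin_cases j <;> simp

lemma pingMat_zpow (c : ℤ) (n : ℤ) : pingMat c 1 ^ n = pingMat c n := by
  have hnat : ∀ m : ℕ, pingMat c 1 ^ (m : ℕ) = pingMat c m := by
    intro m
    induction m with
    | zero => simpa using (pingMat_zero c).symm
    | succ m ih => rw [pow_succ, ih, pingMat_mul]; norm_num
  have hinv : ∀ m : ℤ, (pingMat c m)⁻¹ = pingMat c (-m) := by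
    intro m
    apply inv_eq_of_mul_eq_one_right
    rw [pingMat_mul]; simpa using pingMat_zero c
  rcases n with m | m
  · simpa using hnat m
  · rw [Int.negSucc_eq, _root_.zpow_neg]
    rw [show ((m : ℤ) + 1) = ((m + 1 : ℕ) : ℤ) by push_cast; ring, zpow_natCast, hnat, hinv]

instance slAction : MulAction (Matrix.SpecialLinearGroup (Fin 2) ℤ) (Fin 2 → ℤ) where
  smul g v := g.1.mulVec v
  one_smul v := by
    show (1 : Matrix.SpecialLinearGroup (Fin 2) ℤ).1.mulVec v = v
    simp
  mul_smul g h v := by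
    show (g * h).1.mulVec v = g.1.mulVec (h.1.mulVec v)
    exact (Matrix.mulVec_mulVec _ _ _).symm

lemma sl_smul_def (g : Matrix.SpecialLinearGroup (Fin 2) ℤ) (v : Fin 2 → ℤ) :
    g • v = g.1.mulVec v := rfl

lemma key_ineq (c d n v0 v1 : ℤ) (hcd : 3 ≤ |c - d|) (hn : n ≠ 0)
    (hv : |v0 - d*v1| < |v1|) :
    |v0 - c*v1| < |v1 + 3*n*(v0 - c*v1)| := by
  set s := v0 - d*v1 with hs
  set t := v0 - c*v1 with ht
  have h2 : |(d-c)*v1| = |d-c| * |v1| := abs_mul _ _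
  have h3 : t - s = (d-c)*v1 := by rw [ht, hs]; ring
  have h4 : |t - s| ≤ |t| + |s| := abs_sub t s
  have h5 : (0:ℤ) ≤ |v1| := abs_nonneg v1
  have h1 : (3:ℤ) ≤ |d - c| := by rwa [abs_sub_comm] at hcd
  have h6 : 3 * |v1| ≤ |d - c| * |v1| := by nlinarith
  have h7 : 2 * |v1| < |t| := by
    have := h4; rw [h3, h2] at this; nlinarith [hv]
  have h8 : (1:ℤ) ≤ |n| := Int.one_le_abs hn
  have h9 : |3*n*t| = 3 * (|n| * |t|) := by rw [abs_mul, abs_mul]; simp; ring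
  have h10 : |3*n*t| ≤ |v1 + 3*n*t| + |v1| := by
    have h := abs_sub (v1 + 3*n*t) v1
    have he : v1 + 3*n*t - v1 = 3*n*t := by ring
    rwa [he] at h
  have h11 : |t| ≤ |n| * |t| := le_mul_of_one_le_left (abs_nonneg t) h8
  nlinarith [abs_nonneg t]

def pingSet (c : ℤ) : Set (Fin 2 → ℤ) := {v | |v 0 - c*v 1| < |v 1|}

lemma pingMat_smul (c n : ℤ) (v : Fin 2 → ℤ) :
    pingMat c n • v = ![v 0 + 3*c*n*(v 0 - c*v 1), v 1 + 3*n*(v 0 - c*v 1)] := by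
  funext i
  rw [sl_smul_def]
  fin_cases i <;>
    simp [sl_smul_def, pingMat, Matrix.mulVec, dotProduct, Fin.sum_univ_two] <;> ring

lemma pingSet_nonempty (c : ℤ) : (pingSet c).Nonempty := by
  refine ⟨![c, 1], ?_⟩
  simp [pingSet]

lemma pingSet_disjoint {c d : ℤ} (h : 3 ≤ |c - d|) : Disjoint (pingSet c) (pingSet d) := by
  rw [Set.disjoint_left]
  intro v hc hd
  simp only [pingSet, Set.mem_setOf_eq] at hc hd
  have h2 : |(c-d)*v 1| = |c - d| * |v 1| := abs_mul _ _
  have h3 : (v 0 - d*v 1) - (v 0 - c*v 1) = (c-d)*v 1 := by ring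
  have h4 : |(v 0 - d*v 1) - (v 0 - c*v 1)| ≤ |v 0 - d*v 1| + |v 0 - c*v 1| :=
    abs_sub _ _
  rw [h3, h2] at h4
  have h5 : 3 * |v 1| ≤ |c - d| * |v 1| := by nlinarith [abs_nonneg (v 1)]
  nlinarith [abs_nonneg (v 1)]

lemma pingMat_maps {c d : ℤ} (h : 3 ≤ |c - d|) {n : ℤ} (hn : n ≠ 0) :
    (pingMat c 1 ^ n) • pingSet d ⊆ pingSet c := by
  rintro _ ⟨v, hv, rfl⟩
  simp only [pingSet, Set.mem_setOf_eq] at hv ⊢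
  rw [pingMat_zpow, pingMat_smul]
  simp only [Matrix.cons_val_zero, Matrix.cons_val_one, Matrix.head_cons]
  have he : v 0 + 3*c*n*(v 0 - c*v 1) - c*(v 1 + 3*n*(v 0 - c*v 1))
      = v 0 - c*v 1 := by ring
  rw [he]
  exact key_ineq c d n (v 0) (v 1) h hn hv


theorem freeGroup_lift_injective_of_ping_pong {ι : Type*} [Nontrivial ι] {G : Type*} [Group G]
    (a : ι → G) {α : Type*} [MulAction G α] (X : ι → Set α)
    (hnon : ∀ i, (X i).Nonempty) (hdisj : Pairwise (Function.onFun Disjoint X))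
    (hpp : Pairwise fun i j => ∀ n : ℤ, n ≠ 0 → (a i ^ n) • X j ⊆ X i) :
    Function.Injective (FreeGroup.lift a) := by
  have heq : FreeGroup.lift a =
      (Monoid.CoprodI.lift fun i : ι => FreeGroup.lift fun _ : Unit => a i).comp
        (@freeGroupEquivCoprodI ι).toMonoidHom := by
    ext i
    simp
  rw [heq, MonoidHom.coe_comp]
  refine Function.Injective.comp ?_ (MulEquiv.injective freeGroupEquivCoprodI)
  have hcard : 3 ≤ Cardinal.mk ι ∨ ∃ i : ι, 3 ≤ Cardinal.mk (FreeGroup Unit) := by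
    right
    refine ⟨Classical.arbitrary ι, ?_⟩
    rw [Cardinal.mk_congr FreeGroup.freeGroupUnitEquivInt, Cardinal.mk_int]
    exact le_of_lt (Cardinal.nat_lt_aleph0 3)
  apply Monoid.CoprodI.lift_injective_of_ping_pong _ hcard X hnon hdisj
  intro i j hij h hne
  have hh : FreeGroup.of () ^ (FreeGroup.freeGroupUnitEquivInt h) = h :=
    FreeGroup.freeGroupUnitEquivInt.left_inv h
  have hn : FreeGroup.freeGroupUnitEquivInt h ≠ 0 := by
    intro h0
    rw [h0] at hh
    simp at hh
    exact hne hh.symm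
  have : (FreeGroup.lift fun _ : Unit => a i) h = a i ^ (FreeGroup.freeGroupUnitEquivInt h) := by
    rw [← hh, map_zpow, FreeGroup.lift_apply_of, hh]
  rw [this]
  exact hpp hij _ hn


lemma permMatrix_mul {X : Type*} [Fintype X] [DecidableEq X] (R : Type*) [Semiring R]
    (σ τ : Perm X) :
    ((σ * τ).permMatrix R) = (τ.permMatrix R) * (σ.permMatrix R) := by
  show ((τ.trans σ).toPEquiv.toMatrix : Matrix X X R) = _
  rw [Equiv.toPEquiv_trans, PEquiv.toMatrix_trans]

lemma permMatrix_injective {X : Type*} [Fintype X] [DecidableEq X] (R : Type*)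
    [MonoidWithZero R] [Nontrivial R] :
    Function.Injective (fun σ : Perm X => σ.permMatrix R) := by
  intro σ τ h
  have := PEquiv.toMatrix_injective (α := R) h
  ext x
  have h2 := congrArg (fun f => f x) (congrArg PEquiv.toFun this)
  simpa [Equiv.toPEquiv] using h2

lemma permMatrix_map {X : Type*} [Fintype X] [DecidableEq X] {R S : Type*} [Semiring R]
    [Semiring S] (f : R →+* S) (σ : Perm X) :
    (σ.permMatrix R).map f = σ.permMatrix S := by
  ext i j
  simp only [Matrix.map_apply, Equiv.Perm.permMatrix, PEquiv.toMatrix_apply]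
  split <;> simp

variable (Q : Type*) [Group Q] [Fintype Q] [DecidableEq Q]

/-- The doubled Cayley permutation: left multiplication on `Q ⊕ Q`. -/
def cayley2 : Q →* Perm (Q ⊕ Q) where
  toFun q := (Equiv.mulLeft q).sumCongr (Equiv.mulLeft q)
  map_one' := by ext x; cases x <;> simp
  map_mul' a b := by ext x; cases x <;> simp [mul_assoc]

lemma cayley2_injective : Function.Injective (cayley2 Q) := by
  intro a b h
  have := congrArg (fun σ : Perm (Q ⊕ Q) => σ (Sum.inl 1)) h
  simpa [cayley2] using this

variable (R : Type*) [CommRing R]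

/-- The embedding of a finite group into `SL(Q ⊕ Q, R)` by doubled permutation matrices. -/
def cayleySL : Q →* Matrix.SpecialLinearGroup (Q ⊕ Q) R where
  toFun q := ⟨((cayley2 Q q)⁻¹).permMatrix R, by
    rw [Matrix.det_permutation]
    simp only [map_inv, cayley2, MonoidHom.coe_mk, OneHom.coe_mk, Equiv.Perm.sign_sumCongr]
    rcases Int.units_eq_one_or (Equiv.Perm.sign (Equiv.mulLeft q)) with h | h <;>
      simp [h]⟩
  map_one' := by
    apply Subtype.ext
    show Equiv.Perm.permMatrix R _ = _
    simp only [inv_one, _root_.map_one]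
    show PEquiv.toMatrix (Equiv.toPEquiv (Equiv.refl _)) = _
    rw [Equiv.toPEquiv_refl, PEquiv.toMatrix_refl]
    rfl
  map_mul' a b := by
    apply Subtype.ext
    show Equiv.Perm.permMatrix R _ = (((cayley2 Q a)⁻¹).permMatrix R) * _
    rw [_root_.map_mul, _root_.mul_inv_rev, _root_.permMatrix_mul]

lemma cayleySL_injective [Nontrivial R] : Function.Injective (cayleySL Q R) := by
  intro a b h
  apply cayley2_injective Q
  have h1 : ((cayley2 Q a)⁻¹).permMatrix R = ((cayley2 Q b)⁻¹).permMatrix R :=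
    congrArg Subtype.val h
  have := permMatrix_injective R h1
  exact inv_injective this

lemma cayleySL_map {S : Type*} [CommRing S] (f : R →+* S) (q : Q) :
    Matrix.SpecialLinearGroup.map f (cayleySL Q R q) = cayleySL Q S q := by
  apply Subtype.ext
  show (((cayley2 Q q)⁻¹).permMatrix R).map f = ((cayley2 Q q)⁻¹).permMatrix S
  exact permMatrix_map f _


variable {R : Type*} [CommRing R]

/-- Reindexing `SL` along an equivalence of index types. -/
def SLreindex {m n : Type*} [Fintype m] [Fintype n] [DecidableEq m] [DecidableEq n]
    (e : m ≃ n) : Matrix.SpecialLinearGroup m R →* Matrix.SpecialLinearGroup n R where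
  toFun A := ⟨Matrix.reindex e e A.1, by rw [Matrix.det_reindex_self]; exact A.2⟩
  map_one' := by
    apply Subtype.ext
    show Matrix.reindex e e (1 : Matrix m m R) = 1
    simp [Matrix.reindex_apply, Matrix.submatrix_one_equiv]
  map_mul' A B := by
    apply Subtype.ext
    show Matrix.reindex e e (A.1 * B.1) = Matrix.reindex e e A.1 * Matrix.reindex e e B.1
    simp only [Matrix.reindex_apply]
    rw [Matrix.submatrix_mul_equiv]

lemma SLreindex_injective {m n : Type*} [Fintype m] [Fintype n] [DecidableEq m] [DecidableEq n]
    (e : m ≃ n) : Function.Injective (SLreindex (R := R) e) := by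
  intro A B h
  apply Subtype.ext
  have h1 : Matrix.reindex e e A.1 = Matrix.reindex e e B.1 := congrArg Subtype.val h
  exact (Matrix.reindex e e).injective h1

lemma SLreindex_map {m n S : Type*} [Fintype m] [Fintype n] [DecidableEq m] [DecidableEq n]
    [CommRing S] (f : R →+* S) (e : m ≃ n) (A : Matrix.SpecialLinearGroup m R) :
    Matrix.SpecialLinearGroup.map f (SLreindex e A) = SLreindex e (Matrix.SpecialLinearGroup.map f A) := by
  apply Subtype.ext
  show (Matrix.reindex e e A.1).map f = Matrix.reindex e e (A.1.map f)
  simp [Matrix.reindex_apply, Matrix.submatrix_map]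

/-- Block-diagonal embedding of a product of `SL`s. -/
def SLblock {m k : Type*} [Fintype m] [Fintype k] [DecidableEq m] [DecidableEq k] :
    Matrix.SpecialLinearGroup m R × Matrix.SpecialLinearGroup k R →*
      Matrix.SpecialLinearGroup (m ⊕ k) R where
  toFun p := ⟨Matrix.fromBlocks p.1.1 0 0 p.2.1, by
    rw [Matrix.det_fromBlocks_zero₁₂, p.1.2, p.2.2, one_mul]⟩
  map_one' := by
    apply Subtype.ext
    show Matrix.fromBlocks (1 : Matrix m m R) 0 0 (1 : Matrix k k R) = 1
    simp [Matrix.fromBlocks_one]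
  map_mul' p q := by
    apply Subtype.ext
    show Matrix.fromBlocks (p.1.1 * q.1.1) 0 0 (p.2.1 * q.2.1) = _
    show _ = Matrix.fromBlocks p.1.1 0 0 p.2.1 * Matrix.fromBlocks q.1.1 0 0 q.2.1
    rw [Matrix.fromBlocks_multiply]
    simp

lemma SLblock_injective {m k : Type*} [Fintype m] [Fintype k] [DecidableEq m] [DecidableEq k] :
    Function.Injective (SLblock (R := R) (m := m) (k := k)) := by
  rintro ⟨A, B⟩ ⟨C, D⟩ h
  have h1 : Matrix.fromBlocks A.1 0 0 B.1 = Matrix.fromBlocks C.1 0 0 D.1 :=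
    congrArg Subtype.val h
  rw [Matrix.fromBlocks_inj] at h1
  ext : 1 <;> [exact Subtype.ext h1.1; exact Subtype.ext h1.2.2.2]

lemma SLblock_map {m k S : Type*} [Fintype m] [Fintype k] [DecidableEq m] [DecidableEq k]
    [CommRing S] (f : R →+* S) (A : Matrix.SpecialLinearGroup m R)
    (B : Matrix.SpecialLinearGroup k R) :
    Matrix.SpecialLinearGroup.map f (SLblock (A, B)) =
      SLblock (Matrix.SpecialLinearGroup.map f A, Matrix.SpecialLinearGroup.map f B) := by
  apply Subtype.ext
  show (Matrix.fromBlocks A.1 0 0 B.1).map f = Matrix.fromBlocks (A.1.map f) 0 0 (B.1.map f)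
  rw [Matrix.fromBlocks_map]
  simp


lemma pingMat_red (c k : ℤ) :
    Matrix.SpecialLinearGroup.map (Int.castRingHom (ZMod 3)) (pingMat c k) = 1 := by
  apply Subtype.ext
  show ((pingMat c k).1).map (Int.castRingHom (ZMod 3)) = _
  simp only [pingMat]
  ext i j
  fin_cases i <;> fin_cases j <;>
    simp [Matrix.one_apply, show (3:ZMod 3) = 0 from by decide]

lemma freeGroup_embed_int (r : ℕ) :
    ∃ ρ₀ : FreeGroup (Fin r) →* Matrix.SpecialLinearGroup (Fin 2) ℤ,
      Function.Injective ρ₀ ∧ ∀ i : Fin r,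
        Matrix.SpecialLinearGroup.map (Int.castRingHom (ZMod 3)) (ρ₀ (FreeGroup.of i)) = 1 := by
  classical
  set a : ℤ → Matrix.SpecialLinearGroup (Fin 2) ℤ := fun c => pingMat (3*c) 1 with ha
  have LiftInj : Function.Injective (FreeGroup.lift a) := by
    apply freeGroup_lift_injective_of_ping_pong a (fun c => pingSet (3*c))
    · intro c; exact pingSet_nonempty _
    · intro c d hcd
      apply pingSet_disjoint
      have h1 : (1:ℤ) ≤ |c - d| := Int.one_le_abs (sub_ne_zero.mpr hcd)
      have : |3*c - 3*d| = 3 * |c - d| := by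
        rw [show (3*c - 3*d : ℤ) = 3*(c-d) by ring, abs_mul]; simp
      rw [this]; linarith
    · intro c d hcd n hn
      apply pingMat_maps _ hn
      have h1 : (1:ℤ) ≤ |c - d| := Int.one_le_abs (sub_ne_zero.mpr hcd)
      have : |3*c - 3*d| = 3 * |c - d| := by
        rw [show (3*c - 3*d : ℤ) = 3*(c-d) by ring, abs_mul]; simp
      rw [this]; linarith
  refine ⟨(FreeGroup.lift a).comp (FreeGroup.map (fun i : Fin r => (i : ℤ))), ?_, ?_⟩
  · rcases Nat.eq_zero_or_pos r with hr | hr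
    · subst hr
      intro x y _
      have : Subsingleton (FreeGroup (Fin 0)) := by
        have e : FreeGroup (Fin 0) ≃ Unit :=
          (FreeGroup.freeGroupCongr finZeroEquiv).toEquiv.trans
            FreeGroup.freeGroupEmptyEquivUnit
        exact e.subsingleton
      exact Subsingleton.elim x y
    · apply LiftInj.comp
      set g : ℤ → Fin r := fun z => if h : z.toNat < r then ⟨z.toNat, h⟩ else ⟨0, hr⟩ with hg
      have hleft : ∀ x, FreeGroup.map g (FreeGroup.map (fun i : Fin r => (i : ℤ)) x) = x := by
        intro x
        rw [FreeGroup.map.comp]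
        have : (g ∘ fun i : Fin r => (i : ℤ)) = id := by
          funext i
          simp [hg, Function.comp, i.isLt]
        rw [this, FreeGroup.map.id]
      intro x y h
      have := congrArg (FreeGroup.map g) h
      rwa [hleft, hleft] at this
  · intro i
    simp only [MonoidHom.comp_apply, FreeGroup.map.of, FreeGroup.lift_apply_of]
    exact pingMat_red _ _


/-- For a finite-index normal subgroup `Δ` of the free group `F_r` with quotient
`Q = F_r/Δ`, there exist `n`, a prime `p`, a faithful representation
`ρ : F_r → SL(n,ℤ)` and an embedding `ι : Q → SL(n,F_p)` such that reduction mod `p`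
composed with `ρ` equals `ι` composed with the quotient map. -/
theorem freeGroup_profinite_via_representation (r : ℕ)
    (Δ : Subgroup (FreeGroup (Fin r))) [Δ.Normal] [Δ.FiniteIndex] :
    ∃ (n p : ℕ), p.Prime ∧
      ∃ (ρ : FreeGroup (Fin r) →* Matrix.SpecialLinearGroup (Fin n) ℤ)
        (ι : (FreeGroup (Fin r) ⧸ Δ) →* Matrix.SpecialLinearGroup (Fin n) (ZMod p)),
        Function.Injective ρ ∧ Function.Injective ι ∧
        (Matrix.SpecialLinearGroup.map (Int.castRingHom (ZMod p))).comp ρ =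
          ι.comp (QuotientGroup.mk' Δ) := by
  classical
  obtain ⟨ρ₀, hρ₀inj, hρ₀red⟩ := freeGroup_embed_int r
  set Q := FreeGroup (Fin r) ⧸ Δ with hQ
  letI : Fintype Q := Fintype.ofFinite Q
  set n : ℕ := Fintype.card ((Q ⊕ Q) ⊕ Fin 2) with hn
  set e : (Q ⊕ Q) ⊕ Fin 2 ≃ Fin n := Fintype.equivFin _ with he
  refine ⟨n, 3, by norm_num, ?_⟩
  set ρ : FreeGroup (Fin r) →* Matrix.SpecialLinearGroup (Fin n) ℤ :=
    (SLreindex e).comp (SLblock.comp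
      (((cayleySL Q ℤ).comp (QuotientGroup.mk' Δ)).prod ρ₀)) with hρ
  set ι : Q →* Matrix.SpecialLinearGroup (Fin n) (ZMod 3) :=
    (SLreindex e).comp (SLblock.comp ((cayleySL Q (ZMod 3)).prod 1)) with hι
  refine ⟨ρ, ι, ?_, ?_, ?_⟩
  · intro x y h
    apply hρ₀inj
    have h1 := SLreindex_injective e h
    have h2 := SLblock_injective h1
    exact congrArg Prod.snd h2
  · intro x y h
    have h1 := SLreindex_injective e h
    have h2 := SLblock_injective h1
    exact cayleySL_injective Q (ZMod 3) (congrArg Prod.fst h2)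
  · apply FreeGroup.ext_hom
    intro i
    simp only [MonoidHom.comp_apply]
    rw [hρ]
    simp only [MonoidHom.comp_apply, MonoidHom.prod_apply]
    rw [SLreindex_map, SLblock_map, cayleySL_map, hρ₀red i]
    rw [hι]
    simp only [MonoidHom.comp_apply, MonoidHom.prod_apply, MonoidHom.one_apply]
end
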